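/- arXiv:1202.4514 — 7 statements merged into one kernel-verified Lean document; each statement's English description precedes it below -/
import Mathlib

section
/- Gauss-Bonnet for graphs: For any finite simple graph G, the sum over all vertices x of the curvature K(x) = Σ_{k≥0} (-1)^k V_{k-1}(x)/(k+1) equals the Euler characteristic χ(G) = Σ_{k≥0} (-1)^k v_k. -/
open Finset SimpleGraph MeasureTheory
open scoped Classical

noncomputable section

variable {V : Type*} [Fintype V] [DecidableEq V]

/-- Number of cliques on `k` vertices in `G`. -/
def cliqueCount (G : SimpleGraph V) (k : ℕ) : ℕ := (G.cliqueFinset k).card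

/-- Number of cliques on `k` vertices contained in the unit sphere `S(x)`. -/
def sphereCliques (G : SimpleGraph V) (x : V) (k : ℕ) : ℕ :=
  ((G.cliqueFinset k).filter fun s => s ⊆ G.neighborFinset x).card

/-- Number of `k`-vertex cliques in the exit set `S_f^-(x)`. -/
def minusCliques (G : SimpleGraph V) (f : V → ℝ) (x : V) (k : ℕ) : ℕ :=
  ((G.cliqueFinset k).filter fun s => s ⊆ G.neighborFinset x ∧ ∀ y ∈ s, f y < f x).card

/-- Number of `k`-vertex cliques in the entrance set `S_f^+(x)`. -/
def plusCliques (G : SimpleGraph V) (f : V → ℝ) (x : V) (k : ℕ) : ℕ :=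
  ((G.cliqueFinset k).filter fun s => s ⊆ G.neighborFinset x ∧ ∀ y ∈ s, f x < f y).card

/-- Number of `k`-vertex cliques in `S(x)` with vertices both below and above `f x`. -/
def mixedCliques (G : SimpleGraph V) (f : V → ℝ) (x : V) (k : ℕ) : ℕ :=
  ((G.cliqueFinset k).filter fun s =>
    s ⊆ G.neighborFinset x ∧ (∃ y ∈ s, f y < f x) ∧ (∃ z ∈ s, f x < f z)).card

/-- Euler characteristic `χ(G) = Σ_k (-1)^k v_k`. -/
def eulerChar (G : SimpleGraph V) : ℤ :=
  ∑ k ∈ Finset.range (Fintype.card V + 1), (-1 : ℤ) ^ k * cliqueCount G (k + 1)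

/-- Euler characteristic of the exit set `S_f^-(x)`. -/
def chiMinus (G : SimpleGraph V) (f : V → ℝ) (x : V) : ℤ :=
  ∑ k ∈ Finset.range (Fintype.card V + 1), (-1 : ℤ) ^ k * minusCliques G f x (k + 1)

/-- Poincaré–Hopf index `i_f(x) = 1 - χ(S_f^-(x))`. -/
def pindex (G : SimpleGraph V) (f : V → ℝ) (x : V) : ℤ := 1 - chiMinus G f x

/-- Symmetric index `j_f(x) = (i_f(x) + i_{-f}(x))/2`. -/
def symIndex (G : SimpleGraph V) (f : V → ℝ) (x : V) : ℚ :=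
  ((pindex G f x : ℚ) + (pindex G (-f) x : ℚ)) / 2

/-- Curvature `K(x) = Σ_k (-1)^k V_{k-1}(x)/(k+1)`. -/
def curvature (G : SimpleGraph V) (x : V) : ℚ :=
  ∑ k ∈ Finset.range (Fintype.card V + 1),
    (-1 : ℚ) ^ k * (sphereCliques G x k : ℚ) / (k + 1)

/-- The uniform probability measure on `[-1,1]`. -/
def unif : Measure ℝ := (2 : ENNReal)⁻¹ • volume.restrict (Set.Icc (-1 : ℝ) 1)

/-- The product measure on `V → ℝ` with i.i.d. uniform `[-1,1]` coordinates. -/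
def uniMeasure (V : Type*) [Fintype V] : Measure (V → ℝ) := Measure.pi fun _ => unif

/-! Every `(k+1)`-clique `t` and vertex `x ∈ t` give the `k`-clique `t.erase x` in `S(x)`, and
conversely. So a `(k+1)`-clique contributes `(-1)^k/(k+1)` to the curvature at each of its `k+1`
vertices, and summing over all vertices recovers `Σ_k (-1)^k v_k`. -/

namespace SimpleGraph

theorem sum_card_cliqueFinset_filter_mem (G : SimpleGraph V) (n : ℕ) :
    ∑ x : V, #{t ∈ G.cliqueFinset n | x ∈ t} = n * #(G.cliqueFinset n) :=
  calc ∑ x : V, #{t ∈ G.cliqueFinset n | x ∈ t}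
      = ∑ t ∈ G.cliqueFinset n, #{x ∈ univ | x ∈ t} :=
        sum_card_bipartiteAbove_eq_sum_card_bipartiteBelow (· ∈ ·)
    _ = ∑ _t ∈ G.cliqueFinset n, n := sum_congr rfl fun t ht => by
        rw [filter_mem_eq_inter, univ_inter, (mem_cliqueFinset_iff.1 ht).card_eq]
    _ = n * #(G.cliqueFinset n) := by rw [sum_const, smul_eq_mul, mul_comm]

end SimpleGraph

theorem sphereCliques_eq_card_cliqueFinset_filter_mem (G : SimpleGraph V) (x : V) (k : ℕ) :
    sphereCliques G x k = #{t ∈ G.cliqueFinset (k + 1) | x ∈ t} := by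
  refine card_bij' (fun s _ => insert x s) (fun t _ => t.erase x) ?_ ?_ ?_ ?_
  · intro s hs
    simp only [mem_filter, mem_cliqueFinset_iff] at hs ⊢
    exact ⟨hs.1.insert fun y hy => (G.mem_neighborFinset x y).1 (hs.2 hy), mem_insert_self x s⟩
  · intro t ht
    simp only [mem_filter, mem_cliqueFinset_iff] at ht ⊢
    refine ⟨ht.1.erase_of_mem ht.2, fun y hy => ?_⟩
    exact (G.mem_neighborFinset x y).2
      (ht.1.isClique ht.2 (mem_of_mem_erase hy) (ne_of_mem_erase hy).symm)
  · intro s hs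
    exact erase_insert fun hx => G.notMem_neighborFinset_self x ((mem_filter.1 hs).2 hx)
  · intro t ht
    exact insert_erase (mem_filter.1 ht).2

theorem sum_sphereCliques (G : SimpleGraph V) (k : ℕ) :
    ∑ x : V, sphereCliques G x k = (k + 1) * cliqueCount G (k + 1) := by
  simp only [sphereCliques_eq_card_cliqueFinset_filter_mem]
  exact G.sum_card_cliqueFinset_filter_mem (k + 1)

/-- Gauss–Bonnet for graphs: `Σ_x K(x) = χ(G)`. -/
theorem gauss_bonnet (G : SimpleGraph V) :
    ∑ x : V, curvature G x = (eulerChar G : ℚ) := by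
  simp only [curvature, eulerChar]
  rw [sum_comm]
  push_cast
  refine sum_congr rfl fun k _ => ?_
  rw [← sum_div, ← mul_sum, ← Nat.cast_sum, sum_sphereCliques]
  push_cast
  field_simp

end
end

section
/- Intermediate equations: For a finite simple graph G, an injective function f : V → ℝ, and k ≥ 0, the sum over all vertices x of W_k(x), the number of (k+1)-vertex cliques in the unit sphere S(x) containing both a vertex y with f(y) < f(x) and a vertex z with f(z) > f(x), equals k · v_{k+1}, where v_{k+1} is the number of (k+2)-vertex cliques in G. -/
open Finset SimpleGraph MeasureTheory
open scoped Classical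

noncomputable section

variable {V : Type*} [Fintype V] [DecidableEq V]

/-!
Double counting. Adjoining `x` identifies the cliques of `S(x)` with the cliques of `G` through
`x`, so `Σ_x W_k(x)` counts pairs `(t, x)` where `t` is a `(k+2)`-clique and `f x` lies strictly
between two values of `f` on `t`. Since `f` is injective, these `x` are all vertices of `t` except
its `f`-minimum and `f`-maximum: exactly `k` of them.
-/

section StrictlyBetween

variable {α β : Type*} [LinearOrder β]

def IsStrictlyBetween (f : α → β) (s : Finset α) (x : α) : Prop :=
  (∃ y ∈ s, f y < f x) ∧ ∃ z ∈ s, f x < f z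

-- Definitionally the instance that `mixedCliques` uses, so the two filters agree by `rfl`.
instance (f : α → β) (s : Finset α) (x : α) : Decidable (IsStrictlyBetween f s x) :=
  inferInstanceAs (Decidable ((∃ y ∈ s, f y < f x) ∧ ∃ z ∈ s, f x < f z))

theorem isStrictlyBetween_insert_self {f : α → β} {s : Finset α} {x : α} [DecidableEq α] :
    IsStrictlyBetween f (insert x s) x ↔ IsStrictlyBetween f s x := by
  simp [IsStrictlyBetween]

theorem card_filter_isStrictlyBetween {f : α → β} {s : Finset α} (hf : Set.InjOn f s) :
    #{x ∈ s | IsStrictlyBetween f s x} = #s - 2 := by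
  rcases s.eq_empty_or_nonempty with rfl | hs
  · simp
  obtain ⟨m, hm, hmin⟩ := s.exists_min_image f hs
  obtain ⟨M, hM, hmax⟩ := s.exists_max_image f hs
  have hfilter : {x ∈ s | IsStrictlyBetween f s x} = (s.erase m).erase M := by
    ext x
    simp only [mem_filter, mem_erase]
    constructor
    · rintro ⟨hx, ⟨y, hy, hyx⟩, z, hz, hxz⟩
      refine ⟨?_, ?_, hx⟩
      · rintro rfl
        exact (hmax z hz).not_gt hxz
      · rintro rfl
        exact (hmin y hy).not_gt hyx
    · rintro ⟨hxM, hxm, hx⟩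
      exact ⟨hx, ⟨m, hm, (hmin x hx).lt_of_ne fun h => hxm (hf hx hm h.symm)⟩,
        M, hM, (hmax x hx).lt_of_ne fun h => hxM (hf hx hM h)⟩
  rw [hfilter]
  by_cases hMm : M = m
  · subst hMm
    have hs_le : #s ≤ 1 := card_le_one.2 fun a ha b hb =>
      hf ha hb ((le_antisymm (hmax a ha) (hmin a ha)).trans (le_antisymm (hmax b hb) (hmin b hb)).symm)
    rw [erase_idem, card_erase_of_mem hm]
    omega
  · rw [card_erase_of_mem (mem_erase.2 ⟨hMm, hM⟩), card_erase_of_mem hm]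
    omega

end StrictlyBetween

theorem card_filter_cliqueFinset_subset_neighborFinset (G : SimpleGraph V) (x : V) (n : ℕ)
    (P : Finset V → Prop) [DecidablePred P] :
    #{s ∈ G.cliqueFinset n | s ⊆ G.neighborFinset x ∧ P (insert x s)} =
      #{t ∈ G.cliqueFinset (n + 1) | x ∈ t ∧ P t} := by
  refine card_nbij' (insert x) (fun t => t.erase x) ?_ ?_ ?_ ?_
  · intro s hs
    simp only [mem_coe, mem_filter, mem_cliqueFinset_iff] at hs ⊢
    obtain ⟨hs, hsub, hP⟩ := hs
    exact ⟨hs.insert fun b hb => (G.mem_neighborFinset x b).1 (hsub hb), mem_insert_self x s, hP⟩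
  · intro t ht
    simp only [mem_coe, mem_filter, mem_cliqueFinset_iff] at ht ⊢
    obtain ⟨ht, hx, hP⟩ := ht
    refine ⟨ht.erase_of_mem hx, fun b hb => ?_, by rwa [insert_erase hx]⟩
    rw [mem_erase] at hb
    exact (G.mem_neighborFinset x b).2 (ht.1 hx hb.2 (Ne.symm hb.1))
  · intro s hs
    simp only [mem_coe, mem_filter] at hs
    exact erase_insert fun hx => G.irrefl ((G.mem_neighborFinset x x).1 (hs.2.1 hx))
  · intro t ht
    simp only [mem_coe, mem_filter] at ht
    exact insert_erase ht.2.1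

theorem sum_card_filter_mem_eq_sum_card_filter (C : Finset (Finset V)) (R : V → Finset V → Prop)
    [∀ x t, Decidable (R x t)] :
    ∑ x, #{t ∈ C | x ∈ t ∧ R x t} = ∑ t ∈ C, #{x ∈ t | R x t} := by
  simp_rw [card_filter, ite_and]
  rw [sum_comm]
  simp_rw [sum_ite_mem, univ_inter]

/-- Intermediate equations: `Σ_x W_k(x) = k · v_{k+1}`. -/
theorem intermediate_equations (G : SimpleGraph V) (f : V → ℝ)
    (hf : Function.Injective f) (k : ℕ) :
    ∑ x : V, mixedCliques G f x (k + 1) = k * cliqueCount G (k + 2) := by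
  have hmixed (x : V) : mixedCliques G f x (k + 1) =
      #{t ∈ G.cliqueFinset (k + 2) | x ∈ t ∧ IsStrictlyBetween f t x} := by
    rw [← card_filter_cliqueFinset_subset_neighborFinset]
    simp only [mixedCliques, isStrictlyBetween_insert_self]
    rfl
  calc ∑ x, mixedCliques G f x (k + 1)
      = ∑ t ∈ G.cliqueFinset (k + 2), #{x ∈ t | IsStrictlyBetween f t x} := by
        simp only [hmixed, sum_card_filter_mem_eq_sum_card_filter]
    _ = ∑ _t ∈ G.cliqueFinset (k + 2), k := by
        refine sum_congr rfl fun t ht => ?_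
        rw [card_filter_isStrictlyBetween hf.injOn, (mem_cliqueFinset_iff.1 ht).card_eq,
          Nat.add_sub_cancel]
    _ = k * cliqueCount G (k + 2) := by
        rw [sum_const, smul_eq_mul, mul_comm, cliqueCount]
end
end

section
/- Poincaré-Hopf for graphs: For any finite simple graph G and any injective function f : V → ℝ, the sum over all vertices x of the index i_f(x) = 1 - χ(S_f^-(x)) equals the Euler characteristic χ(G), where S_f^-(x) is the subgraph induced by the neighbors y of x with f(y) < f(x). -/
open Finset SimpleGraph MeasureTheory
open scoped Classical

noncomputable section

variable {V : Type*} [Fintype V] [DecidableEq V]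

/-!
Charge each clique to its `f`-maximal vertex: for injective `f`, `(x, s) ↦ insert x s` is a
bijection from the pairs with `s` an `m`-clique of `S_f^-(x)` onto the `(m + 1)`-cliques of `G`, so
`∑ x, v_m(S_f^-(x)) = v_{m+1}(G)`. Taking alternating sums, `∑ x, χ(S_f^-(x)) = v_1(G) - χ(G)`,
and `v_1(G) = |V|`.
-/

namespace Finset

variable {α β : Type*} [DecidableEq α]

lemma eq_and_eq_of_insert_eq_insert [Preorder β] {f : α → β} {x x' : α} {s s' : Finset α}
    (hs : ∀ y ∈ s, f y < f x) (hs' : ∀ y ∈ s', f y < f x')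
    (h : insert x s = insert x' s') : x = x' ∧ s = s' := by
  have hx : x ∉ s := fun hx => lt_irrefl _ (hs x hx)
  have hx' : x' ∉ s' := fun hx => lt_irrefl _ (hs' x' hx)
  have hxx' : x = x' := by
    by_contra hne
    have hxs' : x ∈ s' := (mem_insert.1 (h ▸ mem_insert_self x s)).resolve_left hne
    have hx's : x' ∈ s := (mem_insert.1 (h ▸ mem_insert_self x' s')).resolve_left (Ne.symm hne)
    exact lt_asymm (hs x' hx's) (hs' x hxs')
  subst hxx'
  refine ⟨rfl, ?_⟩
  simpa [erase_insert hx, erase_insert hx'] using congrArg (erase · x) h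

lemma exists_forall_mem_erase_lt [LinearOrder β] {f : α → β} {t : Finset α} (ht : t.Nonempty)
    (hf : Set.InjOn f t) : ∃ x ∈ t, ∀ y ∈ t.erase x, f y < f x := by
  obtain ⟨x, hxt, hmax⟩ := t.exists_max_image f ht
  refine ⟨x, hxt, fun y hy => (hmax y (mem_of_mem_erase hy)).lt_of_ne fun hxy => ?_⟩
  exact ne_of_mem_erase hy (hf (mem_of_mem_erase hy) hxt hxy)

end Finset

namespace SimpleGraph

variable {G : SimpleGraph V}

lemma IsNClique.insert_of_subset_neighborFinset {m : ℕ} {x : V} {s : Finset V}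
    (hs : G.IsNClique m s) (hsx : s ⊆ G.neighborFinset x) : G.IsNClique (m + 1) (insert x s) :=
  hs.insert fun y hy => (G.mem_neighborFinset x y).1 (hsx hy)

lemma IsNClique.erase_subset_neighborFinset {m : ℕ} {x : V} {t : Finset V}
    (ht : G.IsNClique m t) (hx : x ∈ t) : t.erase x ⊆ G.neighborFinset x := fun y hy =>
  (G.mem_neighborFinset x y).2 <| ht.1 hx (mem_of_mem_erase hy) (ne_of_mem_erase hy).symm

variable (G)

lemma cliqueCount_one : cliqueCount G 1 = Fintype.card V := by
  rw [cliqueCount, ← card_univ]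
  refine (card_bij (fun x _ => {x}) (fun x _ => ?_) (fun _ _ _ _ h => singleton_injective h)
    fun s hs => ?_).symm
  · simp
  · obtain ⟨a, rfl⟩ := isNClique_one.1 (mem_cliqueFinset_iff.1 hs)
    exact ⟨a, mem_univ a, rfl⟩

lemma cliqueCount_eq_zero_of_card_lt {m : ℕ} (hm : Fintype.card V < m) : cliqueCount G m = 0 :=
  Nat.eq_zero_of_le_zero <| (card_cliqueFinset_le (G := G)).trans_eq (Nat.choose_eq_zero_of_lt hm)

lemma sum_minusCliques_eq_cliqueCount_succ {f : V → ℝ} (hf : Function.Injective f) (m : ℕ) :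
    ∑ x, minusCliques G f x m = cliqueCount G (m + 1) := by
  simp only [minusCliques, cliqueCount, ← card_sigma]
  refine card_bij (fun p _ => insert p.1 p.2) ?_ ?_ ?_
  · rintro ⟨x, s⟩ hp
    simp only [mem_sigma, mem_filter, mem_cliqueFinset_iff] at hp ⊢
    obtain ⟨-, hs, hsx, -⟩ := hp
    exact hs.insert_of_subset_neighborFinset hsx
  · rintro ⟨x, s⟩ hp ⟨x', s'⟩ hp' h
    simp only [mem_sigma, mem_filter] at hp hp'
    obtain ⟨-, -, -, hlt⟩ := hp
    obtain ⟨-, -, -, hlt'⟩ := hp'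
    obtain ⟨rfl, rfl⟩ := eq_and_eq_of_insert_eq_insert hlt hlt' h
    rfl
  · intro t ht
    rw [mem_cliqueFinset_iff] at ht
    obtain ⟨x, hxt, hlt⟩ := exists_forall_mem_erase_lt (card_pos.1 (by rw [ht.2]; omega))
      hf.injOn
    refine ⟨⟨x, t.erase x⟩, ?_, insert_erase hxt⟩
    simp only [mem_sigma, mem_univ, mem_filter, mem_cliqueFinset_iff, true_and]
    exact ⟨ht.erase_of_mem hxt, ht.erase_subset_neighborFinset hxt, hlt⟩

lemma sum_chiMinus {f : V → ℝ} (hf : Function.Injective f) :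
    ∑ x, chiMinus G f x =
      ∑ k ∈ range (Fintype.card V + 1), (-1 : ℤ) ^ k * cliqueCount G (k + 2) := by
  simp only [chiMinus]
  rw [sum_comm]
  refine sum_congr rfl fun k _ => ?_
  rw [← mul_sum, ← Nat.cast_sum, sum_minusCliques_eq_cliqueCount_succ G hf]

lemma eulerChar_eq_card_sub :
    eulerChar G =
      Fintype.card V - ∑ k ∈ range (Fintype.card V + 1), (-1 : ℤ) ^ k * cliqueCount G (k + 2) := by
  rw [eulerChar, sum_range_succ', sum_range_succ, cliqueCount_one,
    cliqueCount_eq_zero_of_card_lt G (by omega : Fintype.card V < Fintype.card V + 2)]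
  simp only [pow_succ, mul_neg_one, neg_mul, sum_neg_distrib, pow_zero, Nat.cast_zero, mul_zero,
    add_zero]
  ring

end SimpleGraph

/-- Poincaré–Hopf for graphs: `Σ_x i_f(x) = χ(G)`. -/
theorem poincare_hopf (G : SimpleGraph V) (f : V → ℝ) (hf : Function.Injective f) :
    ∑ x : V, pindex G f x = eulerChar G := by
  simp only [pindex, sum_sub_distrib, sum_const, card_univ, nsmul_one]
  rw [G.sum_chiMinus hf, G.eulerChar_eq_card_sub]
end
end

section
/- Index stability: For a finite simple graph G, the index sum Σ_{x∈V} i_f(x) is the same for all injective functions f : V → ℝ, where i_f(x) = 1 - χ(S_f^-(x)). -/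
open Finset SimpleGraph MeasureTheory
open scoped Classical

noncomputable section

variable {V : Type*} [Fintype V] [DecidableEq V]

lemma sum_minusCliques (G : SimpleGraph V) (f : V → ℝ) (hf : Function.Injective f) (m : ℕ) :
    ∑ x : V, minusCliques G f x m = cliqueCount G (m + 1) := by
  classical
  unfold minusCliques cliqueCount
  rw [← Finset.card_sigma]
  apply Finset.card_bij (fun p _ => insert p.1 p.2)
  · rintro ⟨x, s⟩ hp
    simp only [Finset.mem_sigma, Finset.mem_filter, SimpleGraph.mem_cliqueFinset_iff] at hp ⊢
    obtain ⟨-, hs, hsub, -⟩ := hp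
    exact hs.insert fun b hb => (G.mem_neighborFinset x b).1 (hsub hb)
  · rintro ⟨x, s⟩ hp ⟨y, t⟩ hq h
    simp only [Finset.mem_sigma, Finset.mem_filter] at hp hq
    obtain ⟨-, -, hsub, hfs⟩ := hp
    obtain ⟨-, -, htub, hft⟩ := hq
    have hxs : x ∉ s := fun hx => lt_irrefl _ (hfs x hx)
    have hyt : y ∉ t := fun hy => lt_irrefl _ (hft y hy)
    have hxy : x = y := by
      by_contra hne
      have hx : x ∈ insert y t := h ▸ Finset.mem_insert_self x s
      rcases Finset.mem_insert.1 hx with h1 | h1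
      · exact hne h1
      have hlt : f x < f y := hft x h1
      have hy : y ∈ insert x s := h.symm ▸ Finset.mem_insert_self y t
      rcases Finset.mem_insert.1 hy with h2 | h2
      · exact hne h2.symm
      exact absurd (hfs y h2) (not_lt_of_gt hlt)
    subst hxy
    have hst : s = t := by
      have := congrArg (fun u => Finset.erase u x) h
      simpa [Finset.erase_insert hxs, Finset.erase_insert hyt] using this
    simp [hst]
  · intro K hK
    rw [SimpleGraph.mem_cliqueFinset_iff] at hK
    have hne : K.Nonempty := by
      rw [← Finset.card_pos, hK.2]; omega
    obtain ⟨x, hxK, hmax⟩ := K.exists_max_image f hne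
    refine ⟨⟨x, K.erase x⟩, ?_, Finset.insert_erase hxK⟩
    simp only [Finset.mem_sigma, Finset.mem_univ, true_and, Finset.mem_filter,
      SimpleGraph.mem_cliqueFinset_iff]
    refine ⟨⟨hK.1.subset (Finset.erase_subset _ _),
      by rw [Finset.card_erase_of_mem hxK, hK.2]; rfl⟩, ?_, ?_⟩
    · intro y hy
      rw [SimpleGraph.mem_neighborFinset]
      exact hK.1 hxK (Finset.mem_of_mem_erase hy) (Finset.ne_of_mem_erase hy).symm
    · intro y hy
      exact lt_of_le_of_ne (hmax y (Finset.mem_of_mem_erase hy))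
        (fun hfe => Finset.ne_of_mem_erase hy (hf hfe))

lemma sum_pindex (G : SimpleGraph V) (f : V → ℝ) (hf : Function.Injective f) :
    ∑ x : V, pindex G f x =
      (Fintype.card V : ℤ) - ∑ k ∈ Finset.range (Fintype.card V + 1),
        (-1 : ℤ) ^ k * cliqueCount G (k + 2) := by
  unfold pindex chiMinus
  rw [Finset.sum_sub_distrib]
  congr 1
  · simp
  · rw [Finset.sum_comm]
    refine Finset.sum_congr rfl fun k _ => ?_
    rw [← Finset.mul_sum, ← Nat.cast_sum, sum_minusCliques G f hf (k + 1)]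

/-- Index stability: the index sum is independent of the injective function `f`. -/
theorem index_stability (G : SimpleGraph V) (f g : V → ℝ)
    (hf : Function.Injective f) (hg : Function.Injective g) :
    ∑ x : V, pindex G f x = ∑ x : V, pindex G g x := by
  rw [sum_pindex G f hf, sum_pindex G g hg]

end
end

section
/- Averaging equation: Let G be a finite simple graph with vertex set V of size n, and let f = (f(v))_{v∈V} be chosen with independent uniform([-1,1]) coordinates (injective almost surely). Then for every vertex x and every k ≥ 0, the expected number of (k+1)-vertex cliques in S_f^-(x) (the subgraph induced by neighbors y of x with f(y) < f(x)) equals V_k(x)/(k+2), where V_k(x) is the number of (k+1)-cliques in the subgraph induced by the neighbors of x. -/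
/-! Expanding `minusCliques` as a sum of indicators, the expectation becomes a sum, over the
`(k+1)`-cliques `s` of `S(x)`, of the probability that `x` is the strict maximum of `f` on the
`k+2` vertices `insert x s`. The coordinates of `f` are i.i.d., so a transposition of coordinates
preserves the measure and each vertex of `insert x s` is equally likely to be this maximum. Ties
are null because the law is atomless, so these `k+2` events partition almost all of the space and
each has probability `1/(k+2)`. -/

open Finset SimpleGraph MeasureTheory
open scoped Classical

noncomputable section

variable {V : Type*} [Fintype V] [DecidableEq V]

open ProbabilityTheory

section StrictMax

variable {ι : Type*}

def strictMaxSet (T : Finset ι) (w : ι) : Set (ι → ℝ) :=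
  {f | ∀ z ∈ T, z ≠ w → f z < f w}

theorem measurableSet_strictMaxSet [Countable ι] (T : Finset ι) (w : ι) :
    MeasurableSet (strictMaxSet T w) := by
  simp only [strictMaxSet, Set.ofPred_forall]
  exact .biInter T.countable_toSet fun z _ => .iInter fun _ =>
    measurableSet_lt (measurable_pi_apply z) (measurable_pi_apply w)

theorem strictMaxSet_insert_self [DecidableEq ι] {s : Finset ι} {w : ι} (hw : w ∉ s) :
    strictMaxSet (insert w s) w = {f | ∀ z ∈ s, f z < f w} := by
  ext f
  simp only [strictMaxSet, Set.mem_ofPred_eq, Finset.forall_mem_insert, ne_eq, not_true_eq_false,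
    IsEmpty.forall_iff, true_and]
  exact forall₂_congr fun z hz => ⟨fun h => h (ne_of_mem_of_not_mem hz hw), fun h _ => h⟩

theorem comp_mem_strictMaxSet_iff (σ : Equiv.Perm ι) (T : Finset ι) (w : ι) (f : ι → ℝ) :
    f ∘ σ ∈ strictMaxSet T w ↔ f ∈ strictMaxSet (T.map σ.toEmbedding) (σ w) := by
  simp only [strictMaxSet, Set.mem_ofPred_eq, Finset.forall_mem_map, Equiv.coe_toEmbedding,
    σ.injective.ne_iff, Function.comp_apply]

theorem pairwiseDisjoint_strictMaxSet (T : Finset ι) :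
    (T : Set ι).PairwiseDisjoint (strictMaxSet T) := fun a ha b hb hab =>
  Set.disjoint_left.2 fun _ hfa hfb => (hfa b hb hab.symm).asymm (hfb a ha hab)

theorem mem_biUnion_strictMaxSet {T : Finset ι} (hT : T.Nonempty) {f : ι → ℝ}
    (hf : Function.Injective f) : f ∈ ⋃ w ∈ T, strictMaxSet T w := by
  obtain ⟨m, hm, hmax⟩ := T.exists_max_image f hT
  exact Set.mem_biUnion hm fun z hz hzm => (hmax z hz).lt_of_ne (hf.ne hzm)

end StrictMax

section IIDCoordinates

variable {ι : Type*} [Fintype ι] (μ : Measure ℝ) [IsProbabilityMeasure μ]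

theorem pi_eval_eq_eval_null [NullSingletonClass μ] {a b : ι} (hab : a ≠ b) :
    Measure.pi (fun _ : ι => μ) {f | f a = f b} = 0 := by
  have hind : IndepFun (fun f : ι → ℝ => f a) (fun f => f b) (Measure.pi fun _ => μ) :=
    (iIndepFun_pi (X := fun _ => id) fun _ => aemeasurable_id).indepFun hab
  have hmap := (indepFun_iff_map_prod_eq_prod_map_map (measurable_pi_apply a).aemeasurable
    (measurable_pi_apply b).aemeasurable).1 hind
  rw [(measurePreserving_eval _ a).map_eq, (measurePreserving_eval _ b).map_eq] at hmap
  change Measure.pi _ ((fun f : ι → ℝ => (f a, f b)) ⁻¹' Set.diagonal ℝ) = 0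
  rw [← Measure.map_apply (by fun_prop) measurableSet_diagonal, hmap,
    Measure.prod_apply measurableSet_diagonal]
  simp [Set.preimage, Set.diagonal]

theorem ae_injective_pi [NullSingletonClass μ] :
    ∀ᵐ f ∂Measure.pi (fun _ : ι => μ), Function.Injective f := by
  have hne : ∀ a b : ι, ∀ᵐ f ∂Measure.pi (fun _ : ι => μ), f a = f b → a = b := by
    intro a b
    by_cases hab : a = b
    · exact .of_forall fun _ _ => hab
    · filter_upwards [measure_eq_zero_iff_ae_notMem.1 (pi_eval_eq_eval_null μ hab)] with f hf
      exact fun h => absurd h hf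
  simpa only [Function.Injective, ae_all_iff] using hne

theorem pi_strictMaxSet_eq_of_mem (T : Finset ι) {y w : ι} (hy : y ∈ T) (hw : w ∈ T) :
    Measure.pi (fun _ : ι => μ) (strictMaxSet T w) =
      Measure.pi (fun _ : ι => μ) (strictMaxSet T y) := by
  classical
  have hswap := measurePreserving_arrowCongr' (fun _ : ι => μ) (fun _ => μ) (Equiv.swap y w)
    (MeasurableEquiv.refl ℝ) fun _ => MeasurePreserving.id μ
  rw [← hswap.measure_preimage (measurableSet_strictMaxSet T w).nullMeasurableSet]
  congr 1
  ext f
  have hT : T.map (Equiv.swap y w).toEmbedding = T := Finset.map_perm fun a ha => by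
    by_contra h
    exact ha (Equiv.swap_apply_of_ne_of_ne (fun e => h (e ▸ hy)) fun e => h (e ▸ hw))
  -- `arrowCongr' (swap y w) (refl ℝ)` is definitionally `f ↦ f ∘ swap y w`.
  have := comp_mem_strictMaxSet_iff (Equiv.swap y w) T w f
  rwa [hT, Equiv.swap_apply_right] at this

theorem pi_strictMaxSet [NullSingletonClass μ] {T : Finset ι} {w : ι} (hw : w ∈ T) :
    Measure.pi (fun _ : ι => μ) (strictMaxSet T w) = (#T : ENNReal)⁻¹ := by
  have hmeas : ∀ z ∈ T, MeasurableSet (strictMaxSet T z) :=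
    fun z _ => measurableSet_strictMaxSet T z
  have hunion : Measure.pi (fun _ : ι => μ) (⋃ z ∈ T, strictMaxSet T z) = 1 := by
    rw [← prob_compl_eq_zero_iff (Finset.measurableSet_biUnion T hmeas)]
    exact ae_iff.1 ((ae_injective_pi μ).mono fun f hf => mem_biUnion_strictMaxSet ⟨w, hw⟩ hf)
  rw [measure_biUnion_finset (pairwiseDisjoint_strictMaxSet T) hmeas,
    Finset.sum_congr rfl fun z hz => pi_strictMaxSet_eq_of_mem μ T hw hz, sum_const,
    nsmul_eq_mul, mul_comm] at hunion
  exact ENNReal.eq_inv_of_mul_eq_one_left hunion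

end IIDCoordinates

instance : IsProbabilityMeasure unif :=
  ⟨by simp [unif, Real.volume_Icc, one_add_one_eq_two, ENNReal.inv_mul_cancel]⟩

instance : NullSingletonClass unif where
  measure_singleton x := by simp [unif]

section Graph

variable (G : SimpleGraph V) (x : V) (k : ℕ)

def sphereCliqueFinset : Finset (Finset V) :=
  (G.cliqueFinset k).filter fun s => s ⊆ G.neighborFinset x

theorem minusCliques_eq_sum_indicator (f : V → ℝ) :
    (minusCliques G f x k : ℝ) =
      ∑ s ∈ sphereCliqueFinset G x k, (strictMaxSet (insert x s) x).indicator 1 f := by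
  rw [minusCliques, ← Finset.filter_filter, Finset.card_filter]
  push_cast
  refine Finset.sum_congr rfl fun s hs => ?_
  have hx : x ∉ s := fun h => G.notMem_neighborFinset_self x ((Finset.mem_filter.1 hs).2 h)
  simp only [strictMaxSet_insert_self hx, Set.indicator_apply, Set.mem_ofPred_eq, Pi.one_apply]

theorem integral_minusCliques (ν : Measure (V → ℝ)) [IsFiniteMeasure ν] :
    ∫ f, (minusCliques G f x k : ℝ) ∂ν =
      ∑ s ∈ sphereCliqueFinset G x k, ν.real (strictMaxSet (insert x s) x) := by
  have hmeas (s : Finset V) := measurableSet_strictMaxSet (insert x s) x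
  simp_rw [minusCliques_eq_sum_indicator]
  rw [integral_finsetSum _ fun s _ => (integrable_const 1).indicator (hmeas s)]
  exact Finset.sum_congr rfl fun s _ => integral_indicator_one (hmeas s)

theorem card_sphereCliqueFinset : #(sphereCliqueFinset G x k) = sphereCliques G x k := rfl

theorem card_insert_of_mem_sphereCliqueFinset {s : Finset V}
    (hs : s ∈ sphereCliqueFinset G x k) : #(insert x s) = k + 1 := by
  rw [sphereCliqueFinset, Finset.mem_filter, mem_cliqueFinset_iff] at hs
  rw [Finset.card_insert_of_notMem fun h => G.notMem_neighborFinset_self x (hs.2 h),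
    hs.1.card_eq]

end Graph

/-- Averaging equation: `E[V_k^-(x)] = V_k(x)/(k+2)`. -/
theorem averaging_equation (G : SimpleGraph V) (x : V) (k : ℕ) :
    (∫ f, (minusCliques G f x (k + 1) : ℝ) ∂(uniMeasure V)) =
      (sphereCliques G x (k + 1) : ℝ) / (k + 2) := by
  have hprob : ∀ s ∈ sphereCliqueFinset G x (k + 1),
      (Measure.pi fun _ => unif).real (strictMaxSet (insert x s) x) = 1 / (k + 2) := by
    intro s hs
    rw [measureReal_def, pi_strictMaxSet unif (Finset.mem_insert_self x s),
      card_insert_of_mem_sphereCliqueFinset G x (k + 1) hs, ENNReal.toReal_inv,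
      ENNReal.toReal_natCast]
    push_cast
    ring
  rw [uniMeasure, integral_minusCliques, Finset.sum_congr rfl hprob, sum_const, nsmul_eq_mul,
    card_sphereCliqueFinset, mul_one_div]

end
end

section
/- Index expectation equals curvature: Let G be a finite simple graph, and let f have independent uniform([-1,1]) values on the vertices. Then for every vertex x, E[i_f(x)] = K(x), where i_f(x) = 1 - χ(S_f^-(x)) and K(x) = Σ_{k≥0} (-1)^k V_{k-1}(x)/(k+1). -/
/-!
Counting the cliques of `S_f^-(x)` by size, `i_f(x) = Σ_σ (-1)^|σ| [f < f x on σ]`, the sum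
running over all cliques `σ` of `S(x)`, the empty one included. If `|σ| = k`, conditioning on
`f x = t` shows that `f x` exceeds the `k` independent values on `σ` with probability
`∫ ((t + 1) / 2)^k dt / 2 = 1 / (k + 1)`, so linearity of expectation gives
`E[i_f(x)] = Σ_σ (-1)^|σ| / (|σ| + 1) = K(x)`.
-/

open Finset SimpleGraph MeasureTheory
open scoped Classical

noncomputable section

variable {V : Type*} [Fintype V] [DecidableEq V]

open scoped ENNReal

section ProductMeasure

variable {ι : Type*}

lemma measurableSet_forall_lt (s : Finset ι) (i : ι) :
    MeasurableSet {f : ι → ℝ | ∀ j ∈ s, f j < f i} := by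
  simp only [Set.ofPred_forall]
  exact .biInter s.countable_toSet fun j _ =>
    measurableSet_lt (measurable_pi_apply j) (measurable_pi_apply i)

variable [Fintype ι] [DecidableEq ι] (μ : Measure ℝ) [IsProbabilityMeasure μ]

lemma lmarginal_indicator_forall_lt {s E : Finset ι} {i : ι} (hsE : s ⊆ E) (hiE : i ∉ E)
    (g : ι → ℝ) :
    (∫⋯∫⁻_E, {f : ι → ℝ | ∀ j ∈ s, f j < f i}.indicator 1 ∂fun _ => μ) g
      = μ (Set.Iio (g i)) ^ #s := by
  -- `i ∉ E`, so `f i = g i` stays fixed and the event is a box in the coordinates of `E`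
  set box : Set (E → ℝ) := Set.univ.pi fun j => if (j : ι) ∈ s then Set.Iio (g i) else Set.univ
  have hbox : Function.updateFinset g E ⁻¹' {f | ∀ j ∈ s, f j < f i} = box := by
    ext y
    simp only [box, Set.mem_preimage, Set.mem_ofPred_eq, Set.mem_univ_pi, Function.updateFinset_def]
    refine ⟨fun h j => ?_, fun h j hj => ?_⟩
    · split_ifs with hj
      · simpa [hj, hiE] using h j hj
      · exact Set.mem_univ _
    · simpa [hj, hsE hj, hiE] using h ⟨j, hsE hj⟩
  have hbox_meas : MeasurableSet box :=
    .univ_pi fun j => by split_ifs <;> [exact measurableSet_Iio; exact .univ]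
  have hind : ∀ y, {f : ι → ℝ | ∀ j ∈ s, f j < f i}.indicator 1 (Function.updateFinset g E y)
      = box.indicator 1 y := fun y => by
    rw [← hbox]; exact (Set.indicator_comp_right (g := (1 : (ι → ℝ) → ℝ≥0∞)) _).symm
  rw [lmarginal, lintegral_congr hind, lintegral_indicator_one hbox_meas, Measure.pi_pi]
  calc ∏ j : E, μ (if (j : ι) ∈ s then Set.Iio (g i) else Set.univ)
      = ∏ j ∈ E, if j ∈ s then μ (Set.Iio (g i)) else 1 := by
        rw [← prod_coe_sort E]
        exact prod_congr rfl fun j _ => by split_ifs <;> simp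
    _ = μ (Set.Iio (g i)) ^ #s := by
        rw [prod_ite_mem, inter_eq_right.2 hsE, prod_const]

lemma pi_setOf_forall_lt_eq_lintegral {s : Finset ι} {i : ι} (hi : i ∉ s) :
    Measure.pi (fun _ => μ) {f : ι → ℝ | ∀ j ∈ s, f j < f i} = ∫⁻ t, μ (Set.Iio t) ^ #s ∂μ := by
  have hsE : s ⊆ univ.erase i := fun j hj => mem_erase.2 ⟨ne_of_mem_of_not_mem hj hi, mem_univ j⟩
  rw [← lintegral_indicator_one (measurableSet_forall_lt s i), lintegral_eq_lmarginal_univ 0,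
    ← insert_erase (mem_univ i),
    lmarginal_insert _ (measurable_one.indicator (measurableSet_forall_lt s i)) (notMem_erase i _)]
  simp only [lmarginal_indicator_forall_lt μ hsE (notMem_erase i _), Function.update_self]

end ProductMeasure

instance inst_s12 : IsProbabilityMeasure unif := by
  constructor
  rw [unif, Measure.smul_apply, Measure.restrict_apply_univ, Real.volume_Icc]
  norm_num
  exact ENNReal.inv_mul_cancel two_ne_zero ENNReal.ofNat_ne_top

lemma unif_Iio {t : ℝ} (ht : t ∈ Set.Icc (-1 : ℝ) 1) :
    unif (Set.Iio t) = ENNReal.ofReal ((t + 1) / 2) := by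
  have hIco : Set.Iio t ∩ Set.Icc (-1 : ℝ) 1 = Set.Ico (-1) t := by
    ext u
    simp only [Set.mem_inter_iff, Set.mem_Iio, Set.mem_Icc, Set.mem_Ico]
    constructor
    · rintro ⟨hut, hu, -⟩; exact ⟨hu, hut⟩
    · rintro ⟨hu, hut⟩; exact ⟨hut, hu, hut.le.trans ht.2⟩
  rw [unif, Measure.smul_apply, Measure.restrict_apply measurableSet_Iio, hIco, Real.volume_Ico,
    smul_eq_mul, div_eq_inv_mul, ENNReal.ofReal_mul (by norm_num),
    ENNReal.ofReal_inv_of_pos two_pos, sub_neg_eq_add]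
  norm_num

lemma integral_add_one_div_two_pow (m : ℕ) :
    ∫ t in (-1 : ℝ)..1, ((t + 1) / 2) ^ m = 2 / (m + 1) := by
  have h : (fun t : ℝ => ((t + 1) / 2) ^ m) = fun t => (t / 2 + 1 / 2) ^ m := by
    ext t; ring
  rw [h, intervalIntegral.integral_comp_div_add (fun u => u ^ m) two_ne_zero, integral_pow]
  norm_num
  ring

lemma lintegral_unif_Iio_pow (m : ℕ) :
    ∫⁻ t, unif (Set.Iio t) ^ m ∂unif = ENNReal.ofReal (1 / (m + 1)) := by
  have hint : IntegrableOn (fun t : ℝ => ((t + 1) / 2) ^ m) (Set.Icc (-1) 1) :=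
    (by fun_prop : Continuous fun t : ℝ => ((t + 1) / 2) ^ m).integrableOn_Icc
  have hnonneg : 0 ≤ᵐ[volume.restrict (Set.Icc (-1 : ℝ) 1)] fun t => ((t + 1) / 2) ^ m :=
    (ae_restrict_mem measurableSet_Icc).mono fun t ht => pow_nonneg (by linarith [ht.1]) m
  calc ∫⁻ t, unif (Set.Iio t) ^ m ∂unif
      = 2⁻¹ * ∫⁻ t in Set.Icc (-1) 1, ENNReal.ofReal (((t + 1) / 2) ^ m) := by
        rw [unif, lintegral_smul_measure, smul_eq_mul]
        congr 1
        refine setLIntegral_congr_fun measurableSet_Icc fun t ht => ?_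
        change unif (Set.Iio t) ^ m = _
        rw [unif_Iio ht, ENNReal.ofReal_pow (by linarith [ht.1])]
    _ = ENNReal.ofReal (1 / (m + 1)) := by
        rw [← ofReal_integral_eq_lintegral_ofReal hint hnonneg, integral_Icc_eq_integral_Ioc,
          ← intervalIntegral.integral_of_le (by norm_num), integral_add_one_div_two_pow,
          ← ENNReal.ofReal_ofNat 2, ← ENNReal.ofReal_inv_of_pos two_pos,
          ← ENNReal.ofReal_mul (by norm_num)]
        congr 1
        field_simp

namespace SimpleGraph

lemma sum_range_card_filter_cliqueFinset_smul {M : Type*} [AddCommMonoid M] (G : SimpleGraph V)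
    (p : Finset V → Prop) [DecidablePred p] (w : ℕ → M) {N : ℕ} (hN : Fintype.card V < N) :
    ∑ k ∈ range N, #{s ∈ G.cliqueFinset k | p s} • w k
      = ∑ s ∈ univ.filter fun s : Finset V => G.IsClique (s : Set V) ∧ p s, w #s := by
  have hcard : ∀ s ∈ univ.filter fun s : Finset V => G.IsClique (s : Set V) ∧ p s, #s ∈ range N :=
    fun s _ => mem_range.2 ((card_le_univ s).trans_lt hN)
  rw [← sum_fiberwise_of_maps_to' hcard]
  refine sum_congr rfl fun k _ => ?_
  rw [sum_const, filter_filter]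
  congr 2
  ext s
  simp only [mem_filter, mem_univ, true_and, mem_cliqueFinset_iff, isNClique_iff]
  tauto

lemma card_filter_cliqueFinset_zero (G : SimpleGraph V) {p : Finset V → Prop} [DecidablePred p]
    (h : p ∅) : #{s ∈ G.cliqueFinset 0 | p s} = 1 := by
  rw [card_eq_one]
  exact ⟨∅, by ext s; simp only [mem_filter, mem_cliqueFinset_iff, isNClique_zero,
    mem_singleton, and_iff_left_iff_imp]; rintro rfl; exact h⟩

def sphereCliqueFinset (G : SimpleGraph V) (x : V) : Finset (Finset V) :=
  {s | G.IsClique (s : Set V) ∧ s ⊆ G.neighborFinset x}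

lemma notMem_of_mem_sphereCliqueFinset {G : SimpleGraph V} {x : V} {s : Finset V}
    (hs : s ∈ G.sphereCliqueFinset x) : x ∉ s := fun hx =>
  G.notMem_neighborFinset_self x ((mem_filter.1 hs).2.2 hx)

lemma curvature_eq_sum (G : SimpleGraph V) (x : V) :
    curvature G x = ∑ s ∈ G.sphereCliqueFinset x, (-1 : ℚ) ^ #s / (#s + 1) := by
  rw [curvature, sphereCliqueFinset,
    ← sum_range_card_filter_cliqueFinset_smul G _ (fun k => (-1 : ℚ) ^ k / (k + 1))
      (Nat.lt_succ_self _)]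
  refine sum_congr rfl fun k _ => ?_
  rw [sphereCliques, nsmul_eq_mul]
  ring

lemma pindex_eq_sum (G : SimpleGraph V) (f : V → ℝ) (x : V) :
    pindex G f x = ∑ s ∈ G.sphereCliqueFinset x with ∀ y ∈ s, f y < f x, (-1 : ℤ) ^ #s := by
  -- the empty clique supplies the `1` of `1 - χ`
  have hshift :
      pindex G f x = ∑ k ∈ range (Fintype.card V + 2), minusCliques G f x k • (-1 : ℤ) ^ k := by
    rw [sum_range_succ' (fun k => minusCliques G f x k • (-1 : ℤ) ^ k), minusCliques,
      card_filter_cliqueFinset_zero G ⟨empty_subset _, fun y hy => absurd hy (notMem_empty y)⟩,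
      pindex, chiMinus, sub_eq_add_neg, ← sum_neg_distrib, add_comm, one_smul, pow_zero]
    refine congrArg (· + 1) (sum_congr rfl fun k _ => ?_)
    rw [nsmul_eq_mul, pow_succ]
    ring
  rw [hshift, sphereCliqueFinset, filter_filter]
  unfold minusCliques
  rw [sum_range_card_filter_cliqueFinset_smul G _ _ (by omega)]
  simp only [and_assoc]

end SimpleGraph

instance : IsProbabilityMeasure (uniMeasure V) := by
  unfold uniMeasure; infer_instance

lemma uniMeasure_real_forall_lt {s : Finset V} {x : V} (hx : x ∉ s) :
    (uniMeasure V).real {f : V → ℝ | ∀ y ∈ s, f y < f x} = 1 / (#s + 1) := by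
  rw [measureReal_def, uniMeasure, pi_setOf_forall_lt_eq_lintegral unif hx, lintegral_unif_Iio_pow,
    ENNReal.toReal_ofReal (by positivity)]

lemma pindex_eq_sum_indicator (G : SimpleGraph V) (f : V → ℝ) (x : V) :
    (pindex G f x : ℝ) = ∑ s ∈ G.sphereCliqueFinset x,
      {g : V → ℝ | ∀ y ∈ s, g y < g x}.indicator (fun _ => (-1 : ℝ) ^ #s) f := by
  rw [G.pindex_eq_sum, sum_filter]
  push_cast
  exact sum_congr rfl fun s _ => by simp [Set.indicator_apply]

/-- Index expectation is curvature: `E[i_f(x)] = K(x)`. -/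
theorem index_expectation_is_curvature (G : SimpleGraph V) (x : V) :
    (∫ f, (pindex G f x : ℝ) ∂(uniMeasure V)) = (curvature G x : ℝ) := by
  calc ∫ f, (pindex G f x : ℝ) ∂uniMeasure V
      = ∑ s ∈ G.sphereCliqueFinset x,
          ∫ f, {g : V → ℝ | ∀ y ∈ s, g y < g x}.indicator (fun _ => (-1 : ℝ) ^ #s) f
            ∂uniMeasure V := by
        simp_rw [pindex_eq_sum_indicator]
        exact integral_finsetSum _ fun s _ =>
          (integrable_const _).indicator (measurableSet_forall_lt s x)
    _ = ∑ s ∈ G.sphereCliqueFinset x, (-1 : ℝ) ^ #s / (#s + 1) := sum_congr rfl fun s hs => by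
        rw [integral_indicator_const _ (measurableSet_forall_lt s x),
          uniMeasure_real_forall_lt (SimpleGraph.notMem_of_mem_sphereCliqueFinset hs), smul_eq_mul]
        ring
    _ = curvature G x := by
        rw [G.curvature_eq_sum]
        push_cast
        rfl

end
end

section
/- For a finite simple graph in which every unit sphere S(x) is a cycle graph, the curvature at every vertex equals K(x) = 1 - deg(x)/6, and for any injective f the index equals i_f(x) = 1 - s_f(x)/2, where s_f(x) is the number of sign changes of y ↦ f(y) - f(x) along the cycle S(x). -/
/-!
The unit sphere `S(x)` is a cycle of length at least four, so it has no triangles and each of its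
vertices has exactly two neighbours in it. Hence only cliques with at most two vertices occur, and
the handshake lemma gives as many edges as vertices: `K(x) = 1 - d/2 + d/3`. For the index, count
incidences between the vertices of `S(x)` below `f x` and the edges of `S(x)`: each such vertex lies
on two edges, while an edge has two such endpoints if it lies in `S_f^-(x)`, one if it is a sign
change and none otherwise. So `2 V₀⁻ = 2 V₁⁻ + s_f(x)`, i.e. `χ(S_f^-(x)) = V₀⁻ - V₁⁻ = s_f(x)/2`.
-/

open Finset SimpleGraph MeasureTheory
open scoped Classical

noncomputable section

variable {V : Type*} [Fintype V] [DecidableEq V]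

namespace SimpleGraph

open Fin.CommRing in
theorem cycleGraph_cliqueFree_three {m : ℕ} (hm : 4 ≤ m) : (cycleGraph m).CliqueFree 3 := by
  obtain ⟨n, rfl⟩ : ∃ n, m = n + 4 := ⟨m - 4, by omega⟩
  intro t ht
  obtain ⟨a, b, c, hab, hac, hbc, -⟩ := is3Clique_iff.1 ht
  rw [cycleGraph_adj] at hab hac hbc
  -- the three differences around the triangle are `±1` and sum to `0`, forcing `1 = 0` or `3 = 0`
  have h1 : (1 : Fin (n + 4)) ≠ 0 := by simp
  have h3 : (3 : Fin (n + 4)) ≠ 0 := by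
    simp [Fin.ext_iff, Nat.mod_eq_of_lt (show 3 < n + 4 by omega)]
  rcases hab with hab | hab <;> rcases hbc with hbc | hbc <;> rcases hac with hac | hac <;>
    grind

theorem cliqueFreeOn_three_of_iso_cycleGraph {α : Type*} {G : SimpleGraph α} {s : Set α} {m : ℕ}
    (e : G.induce s ≃g cycleGraph m) (hm : 4 ≤ m) : G.CliqueFreeOn s 3 :=
  (G.cliqueFree_induce_iff s 3).1 ((cycleGraph_cliqueFree_three hm).comap e.isContained)

theorem isNClique_two_iff {α : Type*} [DecidableEq α] {G : SimpleGraph α} {s : Finset α} :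
    G.IsNClique 2 s ↔ ∃ a b, G.Adj a b ∧ s = {a, b} := by
  rw [isNClique_iff, card_eq_two]
  constructor
  · rintro ⟨hs, a, b, hab, rfl⟩
    rw [coe_pair, isClique_pair] at hs
    exact ⟨a, b, hs hab, rfl⟩
  · rintro ⟨a, b, hab, rfl⟩
    rw [coe_pair, isClique_pair]
    exact ⟨fun _ => hab, a, b, hab.ne, rfl⟩

theorem card_neighborFinset_inter_of_iso_cycleGraph {G : SimpleGraph V} {s : Set V} {m : ℕ}
    (e : G.induce s ≃g cycleGraph m) {S : Finset V} (hS : (S : Set V) = s) (hm : 3 ≤ m) {v : V}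
    (hv : v ∈ S) : #(G.neighborFinset v ∩ S) = 2 := by
  subst hS
  obtain ⟨n, rfl⟩ : ∃ n, m = n + 3 := ⟨m - 3, by omega⟩
  have := map_neighborFinset_induce (G := G) ⟨v, mem_coe.2 hv⟩
  rw [toFinset_coe] at this
  rw [← this, card_map, card_neighborFinset_eq_degree, ← e.degree_eq, cycleGraph_degree_three_le]

end SimpleGraph

theorem Finset.card_filter_of_card_eq_two {α : Type*} {e : Finset α} (he : #e = 2)
    (p : α → Prop) [DecidablePred p] :
    #(e.filter p) = 2 * (if ∀ y ∈ e, p y then 1 else 0) +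
      (if (∃ y ∈ e, p y) ∧ ∃ z ∈ e, ¬ p z then 1 else 0) := by
  obtain ⟨a, b, hab, rfl⟩ := card_eq_two.1 he
  by_cases ha : p a <;> by_cases hb : p b <;> simp [filter_insert, filter_singleton, ha, hb, hab]

theorem Finset.sum_range_eq_sum_range_of_eq_zero {M : Type*} [AddCommMonoid M] {u : ℕ → M}
    {m n : ℕ} (hm : ∀ k ≥ m, u k = 0) (hn : ∀ k ≥ n, u k = 0) :
    ∑ k ∈ range m, u k = ∑ k ∈ range n, u k := by
  rw [← eventually_constant_sum hm (le_max_left m n), eventually_constant_sum hn (le_max_right m n)]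

def cliquesIn (G : SimpleGraph V) (S : Finset V) (k : ℕ) : Finset (Finset V) :=
  (G.cliqueFinset k).filter (· ⊆ S)

section cliquesIn

variable {G : SimpleGraph V} {S : Finset V} {k : ℕ}

theorem cliquesIn_zero : cliquesIn G S 0 = {∅} := by
  ext s
  simp +contextual [cliquesIn, isNClique_zero]

theorem card_cliquesIn_one : #(cliquesIn G S 1) = #S := by
  have : cliquesIn G S 1 = S.map ⟨singleton, singleton_injective⟩ := by
    ext s
    simp only [cliquesIn, mem_filter, mem_cliqueFinset_iff, isNClique_one, mem_map]
    aesop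
  rw [this, card_map]

theorem cliquesIn_eq_empty_of_card_lt (hk : Fintype.card V < k) : cliquesIn G S k = ∅ := by
  simp [cliquesIn, cliqueFinset_eq_empty_iff.2 (cliqueFree_of_card_lt hk)]

theorem cliquesIn_eq_empty_of_cliqueFreeOn (hS : G.CliqueFreeOn S 3) (hk : 3 ≤ k) :
    cliquesIn G S k = ∅ :=
  filter_eq_empty_iff.2 fun _ ht hts =>
    CliqueFreeOn.mono G hk hS (coe_subset.2 hts) (mem_cliqueFinset_iff.1 ht)

theorem cliquesIn_filter (p : V → Prop) [DecidablePred p] :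
    cliquesIn G (S.filter p) k = (cliquesIn G S k).filter fun s => ∀ y ∈ s, p y := by
  simp only [cliquesIn, filter_filter, subset_iff, mem_filter, ← forall_and]

theorem card_filter_mem_cliquesIn_two {v : V} (hv : v ∈ S) :
    #((cliquesIn G S 2).filter (v ∈ ·)) = #(G.neighborFinset v ∩ S) := by
  have : (cliquesIn G S 2).filter (v ∈ ·) = (G.neighborFinset v ∩ S).image ({v, ·}) := by
    ext s
    simp only [cliquesIn, mem_filter, mem_cliqueFinset_iff, SimpleGraph.isNClique_two_iff,
      mem_image, mem_inter, mem_neighborFinset]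
    constructor
    · rintro ⟨⟨⟨a, b, hab, rfl⟩, hS⟩, hv⟩
      rcases mem_insert.1 hv with rfl | hv
      · exact ⟨b, ⟨hab, hS (by simp)⟩, rfl⟩
      · obtain rfl := mem_singleton.1 hv
        exact ⟨a, ⟨hab.symm, hS (by simp)⟩, pair_comm _ _⟩
    · rintro ⟨w, ⟨hvw, hw⟩, rfl⟩
      exact ⟨⟨⟨v, w, hvw, rfl⟩, insert_subset hv (singleton_subset_iff.2 hw)⟩, mem_insert_self _ _⟩
  rw [this, card_image_of_injOn]
  intro w hw w' _ h
  have hwv : w ≠ v := (G.ne_of_adj ((mem_neighborFinset ..).1 (mem_inter.1 hw).1)).symm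
  have hw' : w ∈ ({v, w'} : Finset V) := by
    rw [← show ({v, w} : Finset V) = {v, w'} from h]
    simp
  simpa [hwv] using hw'

theorem sum_card_filter_cliquesIn_two (p : V → Prop) [DecidablePred p] :
    ∑ e ∈ cliquesIn G S 2, #(e.filter p) = ∑ v ∈ S.filter p, #(G.neighborFinset v ∩ S) := by
  have := sum_card_bipartiteAbove_eq_sum_card_bipartiteBelow (s := cliquesIn G S 2)
    (t := S.filter p) (r := fun e v => v ∈ e)
  simp only [bipartiteAbove, bipartiteBelow] at this
  convert this using 2 with e he v hv
  · have heS : e ⊆ S := (mem_filter.1 he).2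
    congr 1
    ext a
    simp only [mem_filter]
    exact ⟨fun ⟨hae, hpa⟩ => ⟨⟨heS hae, hpa⟩, hae⟩, fun ⟨⟨_, hpa⟩, hae⟩ => ⟨hae, hpa⟩⟩
  · exact (card_filter_mem_cliquesIn_two (mem_filter.1 hv).1).symm

theorem two_mul_card_cliquesIn_filter_two_add_card_crossing
    (hreg : ∀ v ∈ S, #(G.neighborFinset v ∩ S) = 2) (p : V → Prop) [DecidablePred p] :
    2 * #(cliquesIn G (S.filter p) 2) +
      #((cliquesIn G S 2).filter fun e => (∃ y ∈ e, p y) ∧ ∃ z ∈ e, ¬ p z) =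
      2 * #(S.filter p) := by
  have hpair (e) (he : e ∈ cliquesIn G S 2) := card_filter_of_card_eq_two
    (mem_cliqueFinset_iff.1 (mem_filter.1 he).1).card_eq p
  calc _ = ∑ e ∈ cliquesIn G S 2, #(e.filter p) := by
        rw [cliquesIn_filter, card_filter, card_filter, mul_sum, ← sum_add_distrib]
        exact sum_congr rfl fun e he => by convert (hpair e he).symm
    _ = ∑ v ∈ S.filter p, #(G.neighborFinset v ∩ S) := sum_card_filter_cliquesIn_two p
    _ = 2 * #(S.filter p) := by
        rw [sum_congr rfl fun v hv => hreg v (mem_filter.1 hv).1, sum_const, smul_eq_mul, mul_comm]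

theorem card_cliquesIn_two_of_card_neighborFinset_inter_eq_two
    (hreg : ∀ v ∈ S, #(G.neighborFinset v ∩ S) = 2) : #(cliquesIn G S 2) = #S := by
  have := two_mul_card_cliquesIn_filter_two_add_card_crossing hreg fun _ => True
  simp only [filter_true, not_true_eq_false, and_false, exists_false, filter_false, card_empty,
    add_zero] at this
  omega

end cliquesIn

section sphere

variable {G : SimpleGraph V} {x : V}

theorem sphereCliques_eq_card_cliquesIn (k : ℕ) :
    sphereCliques G x k = #(cliquesIn G (G.neighborFinset x) k) := rfl

theorem minusCliques_eq_card_cliquesIn (f : V → ℝ) (k : ℕ) :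
    minusCliques G f x k = #(cliquesIn G ((G.neighborFinset x).filter (f · < f x)) k) := by
  rw [minusCliques, cliquesIn_filter, cliquesIn, filter_filter]

theorem mixedCliques_two_eq_card_filter {f : V → ℝ} (hf : Function.Injective f) :
    mixedCliques G f x 2 = #((cliquesIn G (G.neighborFinset x) 2).filter
      fun e => (∃ y ∈ e, f y < f x) ∧ ∃ z ∈ e, ¬ f z < f x) := by
  rw [mixedCliques, cliquesIn, filter_filter]
  refine congrArg card (filter_congr fun s _ => and_congr_right fun hs =>
    and_congr_right fun _ => exists_congr fun z => and_congr_right fun hz => ?_)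
  have hne : f x ≠ f z := hf.ne (G.ne_of_adj ((mem_neighborFinset ..).1 (hs hz)))
  rw [not_lt, lt_iff_le_and_ne, and_iff_left hne]

theorem curvature_eq_one_sub_degree_div_six
    (htri : G.CliqueFreeOn (G.neighborFinset x) 3)
    (hreg : ∀ v ∈ G.neighborFinset x, #(G.neighborFinset v ∩ G.neighborFinset x) = 2) :
    curvature G x = 1 - (G.degree x : ℚ) / 6 := by
  rw [curvature, sum_range_eq_sum_range_of_eq_zero (n := 3)]
  · simp only [sum_range_succ, sum_range_zero, sphereCliques_eq_card_cliquesIn, cliquesIn_zero,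
      card_singleton, card_cliquesIn_one,
      card_cliquesIn_two_of_card_neighborFinset_inter_eq_two hreg, card_neighborFinset_eq_degree]
    push_cast
    ring
  · intro k hk
    rw [sphereCliques_eq_card_cliquesIn, cliquesIn_eq_empty_of_card_lt (by omega)]
    simp
  · intro k hk
    rw [sphereCliques_eq_card_cliquesIn, cliquesIn_eq_empty_of_cliqueFreeOn htri hk]
    simp

theorem pindex_eq_one_sub_mixedCliques_div_two {f : V → ℝ}
    (hf : Function.Injective f) (htri : G.CliqueFreeOn (G.neighborFinset x) 3)
    (hreg : ∀ v ∈ G.neighborFinset x, #(G.neighborFinset v ∩ G.neighborFinset x) = 2) :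
    (pindex G f x : ℚ) = 1 - (mixedCliques G f x 2 : ℚ) / 2 := by
  set T := (G.neighborFinset x).filter (f · < f x)
  have hchi : chiMinus G f x = #T - #(cliquesIn G T 2) := by
    rw [chiMinus, sum_range_eq_sum_range_of_eq_zero (n := 2)]
    · simp [sum_range_succ, minusCliques_eq_card_cliquesIn, card_cliquesIn_one, T]
      ring
    · intro k hk
      rw [minusCliques_eq_card_cliquesIn, cliquesIn_eq_empty_of_card_lt (by omega)]
      simp
    · intro k hk
      have htriT : G.CliqueFreeOn T 3 :=
        CliqueFreeOn.subset G (coe_subset.2 (filter_subset _ _)) htri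
      rw [minusCliques_eq_card_cliquesIn, cliquesIn_eq_empty_of_cliqueFreeOn htriT (by omega)]
      simp
  have hcount := two_mul_card_cliquesIn_filter_two_add_card_crossing hreg (f · < f x)
  rw [← mixedCliques_two_eq_card_filter hf] at hcount
  have hcountQ : (2 * #(cliquesIn G T 2) + mixedCliques G f x 2 : ℚ) = 2 * #T := by
    exact_mod_cast hcount
  rw [pindex, hchi]
  push_cast
  linarith

end sphere

/-- If every unit sphere `S(x)` is a cycle graph (of length `deg(x) ≥ 4`), then
`K(x) = 1 - deg(x)/6` and `i_f(x) = 1 - s_f(x)/2`, where `s_f(x)` is the number of sign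
changes of `y ↦ f(y) - f(x)` along the cycle `S(x)`, i.e. the number of edges of `S(x)`
with one endpoint below and one above `f(x)`. -/
theorem sphere_cycle_curvature_index (G : SimpleGraph V)
    (h : ∀ x : V, 4 ≤ G.degree x ∧
      Nonempty ((G.induce (G.neighborSet x)) ≃g SimpleGraph.cycleGraph (G.degree x)))
    (f : V → ℝ) (hf : Function.Injective f) (x : V) :
    curvature G x = 1 - (G.degree x : ℚ) / 6 ∧
    (pindex G f x : ℚ) = 1 - (mixedCliques G f x 2 : ℚ) / 2 := by
  obtain ⟨hdeg, ⟨e⟩⟩ := h x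
  have htri := coe_neighborFinset G x ▸ cliqueFreeOn_three_of_iso_cycleGraph e hdeg
  have hreg (v) (hv : v ∈ G.neighborFinset x) :=
    card_neighborFinset_inter_of_iso_cycleGraph e (coe_neighborFinset G x) (by omega) hv
  exact ⟨curvature_eq_one_sub_degree_div_six htri hreg,
    pindex_eq_one_sub_mixedCliques_div_two hf htri hreg⟩
end
end
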